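/- arXiv:1906.09347 — 2 statements merged into one kernel-verified Lean document; each statement's English description precedes it below -/
import Mathlib

section
/- Suppose μ₁ = μ₂ =: μ and −1 < ρ < 0. Then the infimum of g(t,s) over (t,s) ∈ (0,∞)² equals 8(1−ρ)μ, and the set of minimizers of g on (0,∞)² is exactly the two-point set {((1−2ρ)/μ, 1/((1−2ρ)μ)), (1/((1−2ρ)μ), (1−2ρ)/μ)}. -/
open Matrix

/-- The covariance matrix of `(X₁(t), X₂(s))`. -/
noncomputable def covM (ρ t s : ℝ) : Matrix (Fin 2) (Fin 2) ℝ :=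
  !![t, ρ * min t s; ρ * min t s, s]

/-- The quadratic form `(x,y) Σ_{ts}⁻¹ (x,y)ᵀ`. -/
noncomputable def quadF (ρ t s x y : ℝ) : ℝ :=
  dotProduct ![x, y] ((covM ρ t s)⁻¹.mulVec ![x, y])

/-- `g(t,s) = inf{ (x,y) Σ_{ts}⁻¹ (x,y)ᵀ : x ≥ 1+μ₁t, y ≥ 1+μ₂s }`. -/
noncomputable def gFun (μ₁ μ₂ ρ t s : ℝ) : ℝ :=
  sInf { q : ℝ | ∃ x y : ℝ, 1 + μ₁ * t ≤ x ∧ 1 + μ₂ * s ≤ y ∧ q = quadF ρ t s x y }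

/-- `g₃(t,s)`: the quadratic form at the corner point `(1+μ₁t, 1+μ₂s)`. -/
noncomputable def g3Fun (μ₁ μ₂ ρ t s : ℝ) : ℝ :=
  quadF ρ t s (1 + μ₁ * t) (1 + μ₂ * s)

/-!
For `ρ ≤ 0` the off-diagonal entry of `Σ_{ts}⁻¹` is nonnegative, so the quadratic form is monotone
on the positive quadrant and the infimum defining `g(t,s)` is attained at the corner
`(1 + μt, 1 + μs)`. That value is symmetric in `(t, s)`, and for `s ≤ t` the substitution
`k = 1 - 2ρ`, `u = μt`, `a = kμs` turns `μ k² det Σ_{ts} (g(t,s) - 8(1-ρ)μ)` into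
`-2ρ (a u² + k u + k² a² - 3kau) + a (u - k)² + k u (a - 1)²`. The first summand is nonnegative
and the other two vanish only at `u = k`, `a = 1`.
-/

lemma covM_det (ρ t s : ℝ) : (covM ρ t s).det = t * s - ρ ^ 2 * min t s ^ 2 := by
  rw [covM, det_fin_two_of]
  ring

lemma covM_det_pos {ρ t s : ℝ} (hρl : -1 < ρ) (hρu : ρ < 1) (ht : 0 < t) (hs : 0 < s) :
    0 < (covM ρ t s).det := by
  have hmin : min t s ^ 2 ≤ t * s := by
    rw [sq]; exact mul_le_mul (min_le_left t s) (min_le_right t s) (le_min ht.le hs.le) ht.le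
  have hρ2 : 0 < 1 - ρ ^ 2 := by nlinarith
  rw [covM_det]
  nlinarith [mul_le_mul_of_nonneg_left hmin (sq_nonneg ρ), mul_pos hρ2 (mul_pos ht hs)]

lemma quadF_eq (ρ t s x y : ℝ) :
    quadF ρ t s x y = (s * x ^ 2 - 2 * ρ * min t s * x * y + t * y ^ 2) / (covM ρ t s).det := by
  rw [quadF, inv_def, Ring.inverse_eq_inv', div_eq_inv_mul]
  simp only [dotProduct, mulVec, covM, det_fin_two_of, adjugate_fin_two, of_apply, cons_val',
    cons_val_one, cons_val_fin_one, cons_val_zero, Matrix.smul_apply, smul_eq_mul, Fin.sum_univ_two]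
  ring

lemma quadF_comm (ρ t s x y : ℝ) : quadF ρ t s x y = quadF ρ s t y x := by
  rw [quadF_eq, quadF_eq, covM_det, covM_det, min_comm]
  ring

lemma quadF_le_quadF {ρ t s x y x' y' : ℝ} (hρl : -1 < ρ) (hρ : ρ ≤ 0) (ht : 0 < t)
    (hs : 0 < s) (hx : 0 ≤ x) (hy : 0 ≤ y) (hxx' : x ≤ x') (hyy' : y ≤ y') :
    quadF ρ t s x y ≤ quadF ρ t s x' y' := by
  rw [quadF_eq, quadF_eq]
  gcongr ?_ / _
  · exact (covM_det_pos hρl (by linarith) ht hs).le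
  · have hc : 0 ≤ -(2 * ρ * min t s) := by
      have := le_min ht.le hs.le
      nlinarith
    have hxy : x * y ≤ x' * y' := mul_le_mul hxx' hyy' hy (hx.trans hxx')
    nlinarith [mul_le_mul_of_nonneg_left hxy hc, pow_le_pow_left₀ hx hxx' 2,
      pow_le_pow_left₀ hy hyy' 2]

lemma gFun_eq_g3Fun {μ₁ μ₂ ρ t s : ℝ} (hρl : -1 < ρ) (hρ : ρ ≤ 0) (ht : 0 < t) (hs : 0 < s)
    (h₁ : 0 ≤ 1 + μ₁ * t) (h₂ : 0 ≤ 1 + μ₂ * s) : gFun μ₁ μ₂ ρ t s = g3Fun μ₁ μ₂ ρ t s := by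
  refine IsLeast.csInf_eq ⟨⟨_, _, le_rfl, le_rfl, rfl⟩, ?_⟩
  rintro q ⟨x, y, hx, hy, rfl⟩
  exact quadF_le_quadF hρl hρ ht hs h₁ h₂ hx hy

lemma g3Fun_comm (μ₁ μ₂ ρ t s : ℝ) : g3Fun μ₁ μ₂ ρ t s = g3Fun μ₂ μ₁ ρ s t :=
  quadF_comm ..

lemma three_mul_mul_mul_le {k u a : ℝ} (hk : 0 ≤ k) (hu : 0 ≤ u) (ha : 0 ≤ a) :
    3 * k * a * u ≤ a * u ^ 2 + k * u + k ^ 2 * a ^ 2 := by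
  -- a discriminant in `a` for `u ≤ 4k`; every term is nonnegative for `u ≥ 3k`
  rcases le_total u (4 * k) with h | h
  · have key : 4 * k ^ 2 * (a * u ^ 2 + k * u + k ^ 2 * a ^ 2 - 3 * k * a * u)
        = (2 * k ^ 2 * a + u ^ 2 - 3 * k * u) ^ 2 + u * (u - k) ^ 2 * (4 * k - u) := by ring
    rcases hk.eq_or_lt with rfl | hk
    · nlinarith [mul_nonneg ha (sq_nonneg u)]
    · have : 0 ≤ u * (u - k) ^ 2 * (4 * k - u) :=
        mul_nonneg (mul_nonneg hu (sq_nonneg _)) (by linarith)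
      have : 0 ≤ 4 * k ^ 2 * (a * u ^ 2 + k * u + k ^ 2 * a ^ 2 - 3 * k * a * u) := by
        rw [key]; positivity
      nlinarith [pow_pos hk 2]
  · nlinarith [mul_nonneg (mul_nonneg ha hu) (by linarith : 0 ≤ u - 3 * k), mul_nonneg hk hu,
      sq_nonneg (k * a)]

def scaledExcess (ρ k u a : ℝ) : ℝ :=
  -2 * ρ * (a * u ^ 2 + k * u + k ^ 2 * a ^ 2 - 3 * k * a * u)
    + (a * (u - k) ^ 2 + k * u * (a - 1) ^ 2)

lemma scaledExcess_nonneg {ρ k u a : ℝ} (hρ : ρ ≤ 0) (hk : 0 ≤ k) (hu : 0 ≤ u) (ha : 0 ≤ a) :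
    0 ≤ scaledExcess ρ k u a := by
  have := sub_nonneg.2 (three_mul_mul_mul_le hk hu ha)
  have : 0 ≤ -2 * ρ := by linarith
  unfold scaledExcess
  positivity

lemma scaledExcess_eq_zero_iff {ρ k u a : ℝ} (hρ : ρ ≤ 0) (hk : 0 < k) (hu : 0 < u) (ha : 0 < a) :
    scaledExcess ρ k u a = 0 ↔ u = k ∧ a = 1 := by
  constructor
  · intro h
    have hA := mul_nonneg (by linarith : 0 ≤ -2 * ρ)
      (sub_nonneg.2 (three_mul_mul_mul_le hk.le hu.le ha.le))
    have h₁ : 0 ≤ a * (u - k) ^ 2 := by positivity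
    have h₂ : 0 ≤ k * u * (a - 1) ^ 2 := by positivity
    unfold scaledExcess at h
    have e₁ : (u - k) ^ 2 = 0 :=
      (mul_eq_zero.1 (by linarith : a * (u - k) ^ 2 = 0)).resolve_left ha.ne'
    have e₂ : (a - 1) ^ 2 = 0 :=
      (mul_eq_zero.1 (by linarith : k * u * (a - 1) ^ 2 = 0)).resolve_left (by positivity)
    exact ⟨sub_eq_zero.1 (pow_eq_zero_iff two_ne_zero |>.1 e₁),
      sub_eq_zero.1 (pow_eq_zero_iff two_ne_zero |>.1 e₂)⟩
  · rintro ⟨rfl, rfl⟩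
    unfold scaledExcess
    ring

lemma g3Fun_sub_eq_of_le {μ ρ t s : ℝ} (hμ : μ ≠ 0) (hk : 1 - 2 * ρ ≠ 0)
    (hD : (covM ρ t s).det ≠ 0) (hst : s ≤ t) :
    g3Fun μ μ ρ t s - 8 * (1 - ρ) * μ = scaledExcess ρ (1 - 2 * ρ) (μ * t) ((1 - 2 * ρ) * μ * s)
      / (μ * (1 - 2 * ρ) ^ 2 * (covM ρ t s).det) := by
  rw [eq_div_iff (by positivity), g3Fun, quadF_eq]
  field_simp
  rw [covM_det, min_eq_right hst, scaledExcess]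
  ring

section
variable {μ ρ t s : ℝ} (hμ : 0 < μ) (hρl : -1 < ρ) (hρ : ρ ≤ 0) (hs : 0 < s) (hst : s ≤ t)
include hμ hρl hρ hs hst

lemma le_g3Fun_of_le : 8 * (1 - ρ) * μ ≤ g3Fun μ μ ρ t s := by
  have hk : 0 < 1 - 2 * ρ := by linarith
  have hD := covM_det_pos hρl (by linarith) (hs.trans_le hst) hs
  rw [← sub_nonneg, g3Fun_sub_eq_of_le hμ.ne' hk.ne' hD.ne' hst]
  exact div_nonneg (scaledExcess_nonneg hρ hk.le (mul_pos hμ (hs.trans_le hst)).le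
    (mul_pos (mul_pos hk hμ) hs).le) (by positivity)

lemma g3Fun_eq_iff_of_le :
    g3Fun μ μ ρ t s = 8 * (1 - ρ) * μ ↔ t = (1 - 2 * ρ) / μ ∧ s = 1 / ((1 - 2 * ρ) * μ) := by
  have hk : 0 < 1 - 2 * ρ := by linarith
  have ht := hs.trans_le hst
  have hD := covM_det_pos hρl (by linarith) ht hs
  rw [← sub_eq_zero, g3Fun_sub_eq_of_le hμ.ne' hk.ne' hD.ne' hst, div_eq_zero_iff,
    or_iff_left (by positivity), scaledExcess_eq_zero_iff hρ hk (by positivity) (by positivity),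
    eq_div_iff hμ.ne', eq_div_iff (by positivity)]
  constructor <;> rintro ⟨h₁, h₂⟩ <;> constructor <;> linarith

end

section
variable {μ ρ t s : ℝ} (hμ : 0 < μ) (hρl : -1 < ρ) (hρ : ρ ≤ 0) (ht : 0 < t) (hs : 0 < s)
include hμ hρl hρ ht hs

lemma le_g3Fun : 8 * (1 - ρ) * μ ≤ g3Fun μ μ ρ t s := by
  rcases le_total s t with hst | hts
  · exact le_g3Fun_of_le hμ hρl hρ hs hst
  · exact g3Fun_comm μ μ ρ t s ▸ le_g3Fun_of_le hμ hρl hρ ht hts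

lemma g3Fun_eq_iff :
    g3Fun μ μ ρ t s = 8 * (1 - ρ) * μ ↔
      (t, s) = ((1 - 2 * ρ) / μ, 1 / ((1 - 2 * ρ) * μ)) ∨
      (t, s) = (1 / ((1 - 2 * ρ) * μ), (1 - 2 * ρ) / μ) := by
  have hk : 1 ≤ 1 - 2 * ρ := by linarith
  have hle : 1 / ((1 - 2 * ρ) * μ) ≤ (1 - 2 * ρ) / μ := by
    rw [div_le_div_iff₀ (by positivity) hμ]
    nlinarith [mul_le_mul_of_nonneg_right (one_le_pow₀ (n := 2) hk) hμ.le]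
  simp only [Prod.mk.injEq]
  constructor
  · intro h
    rcases le_total s t with hst | hts
    · exact .inl ((g3Fun_eq_iff_of_le hμ hρl hρ hs hst).1 h)
    · rw [g3Fun_comm] at h
      exact .inr ((g3Fun_eq_iff_of_le hμ hρl hρ ht hts).1 h).symm
  · rintro (⟨rfl, rfl⟩ | ⟨rfl, rfl⟩)
    · exact (g3Fun_eq_iff_of_le hμ hρl hρ hs hle).2 ⟨rfl, rfl⟩
    · exact g3Fun_comm μ μ ρ _ _ ▸ (g3Fun_eq_iff_of_le hμ hρl hρ ht hle).2 ⟨rfl, rfl⟩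

end

theorem stmt2 (μ : ℝ) (hμ : 0 < μ) (ρ : ℝ) (hρl : -1 < ρ) (hρu : ρ < 0) :
    IsLeast { v : ℝ | ∃ t s : ℝ, 0 < t ∧ 0 < s ∧ v = gFun μ μ ρ t s }
      (8 * (1 - ρ) * μ) ∧
    { p : ℝ × ℝ | 0 < p.1 ∧ 0 < p.2 ∧ gFun μ μ ρ p.1 p.2 = 8 * (1 - ρ) * μ }
      = {((1 - 2 * ρ) / μ, 1 / ((1 - 2 * ρ) * μ)),
         (1 / ((1 - 2 * ρ) * μ), (1 - 2 * ρ) / μ)} := by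
  have hg : ∀ t s, 0 < t → 0 < s → gFun μ μ ρ t s = g3Fun μ μ ρ t s := fun t s ht hs =>
    gFun_eq_g3Fun hρl hρu.le ht hs (by positivity) (by positivity)
  have hk : 0 < 1 - 2 * ρ := by linarith
  have ht₀ : 0 < (1 - 2 * ρ) / μ := by positivity
  have hs₀ : 0 < 1 / ((1 - 2 * ρ) * μ) := by positivity
  refine ⟨⟨⟨_, _, ht₀, hs₀, ?_⟩, ?_⟩, ?_⟩
  · rw [hg _ _ ht₀ hs₀, (g3Fun_eq_iff hμ hρl hρu.le ht₀ hs₀).2 (.inl rfl)]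
  · rintro _ ⟨t, s, ht, hs, rfl⟩
    exact hg t s ht hs ▸ le_g3Fun hμ hρl hρu.le ht hs
  · ext ⟨t, s⟩
    simp only [Set.mem_ofPred_eq, Set.mem_insert_iff, Set.mem_singleton_iff]
    constructor
    · rintro ⟨ht, hs, h⟩
      exact (g3Fun_eq_iff hμ hρl hρu.le ht hs).1 (hg t s ht hs ▸ h)
    · rintro (h | h) <;> obtain ⟨rfl, rfl⟩ := Prod.mk.inj h
      · exact ⟨ht₀, hs₀, hg _ _ ht₀ hs₀ ▸ (g3Fun_eq_iff hμ hρl hρu.le ht₀ hs₀).2 (.inl rfl)⟩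
      · exact ⟨hs₀, ht₀, hg _ _ hs₀ ht₀ ▸ (g3Fun_eq_iff hμ hρl hρu.le hs₀ ht₀).2 (.inr rfl)⟩
end

section
/- Suppose ρ̂₂ < ρ < 1 (which forces μ₁ < μ₂). Then the infimum of g(t,s) over the region B̄ = {(t,s) : 0 < t ≤ s} equals g₂(1/μ₂) = 4μ₂. -/
open Matrix

/-- `g₂(s) = (1+μ₂s)²/s`. -/
noncomputable def g2Fun (μ₂ s : ℝ) : ℝ := (1 + μ₂ * s) ^ 2 / s


/-! When `t ≤ s` the quadratic form splits as
`(x,y) Σ_{ts}⁻¹ (x,y)ᵀ = y²/s + (s x - ρ t y)² / (s t (s - ρ² t))`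
(a Schur complement), so `g(t,s) ≥ (1+μ₂s)²/s = g₂(s) ≥ 4μ₂`. On the diagonal `t = s` the square
vanishes at `x = ρ y`, which is admissible for `y = 1 + μ₂ s` as soon as `1 + μ₁ s ≤ ρ (1 + μ₂ s)`;
at `s = 1/μ₂` this is exactly `ρ̂₂ ≤ ρ`, so `g(1/μ₂, 1/μ₂) = g₂(1/μ₂) = 4μ₂` is attained. -/

lemma quadF_eq_of_le {ρ t s : ℝ} (x y : ℝ) (hts : t ≤ s) (hdet : t * (s - ρ ^ 2 * t) ≠ 0) :
    quadF ρ t s x y = (s * x ^ 2 - 2 * ρ * t * x * y + t * y ^ 2) / (t * (s - ρ ^ 2 * t)) := by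
  have hdet' : s * t - ρ ^ 2 * t ^ 2 ≠ 0 := by convert hdet using 1; ring
  rw [eq_div_iff hdet]
  simp only [quadF, covM, min_eq_left hts, inv_def, det_fin_two_of, Ring.inverse_eq_inv',
    adjugate_fin_two_of, dotProduct, mulVec, Matrix.smul_apply, of_apply, cons_val', cons_val_fin_one,
    smul_eq_mul, Fin.sum_univ_two, Fin.isValue, cons_val_zero, cons_val_one, mul_neg, neg_mul]
  linear_combination (s * x ^ 2 - 2 * ρ * t * x * y + t * y ^ 2) * mul_inv_cancel₀ hdet'

lemma det_pos_of_le {ρ t s : ℝ} (hρ : ρ ^ 2 < 1) (ht : 0 < t) (hts : t ≤ s) :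
    0 < t * (s - ρ ^ 2 * t) :=
  mul_pos ht (by nlinarith)

lemma sq_div_le_quadF {ρ t s : ℝ} (x y : ℝ) (hρ : ρ ^ 2 < 1) (ht : 0 < t) (hts : t ≤ s) :
    y ^ 2 / s ≤ quadF ρ t s x y := by
  have hdet := det_pos_of_le hρ ht hts
  rw [quadF_eq_of_le x y hts hdet.ne', div_le_div_iff₀ (ht.trans_le hts) hdet]
  nlinarith [sq_nonneg (s * x - ρ * t * y)]

lemma quadF_diag_mul_self {ρ s : ℝ} (y : ℝ) (hρ : ρ ^ 2 < 1) (hs : 0 < s) :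
    quadF ρ s s (ρ * y) y = y ^ 2 / s := by
  have hdet := det_pos_of_le hρ hs le_rfl
  rw [quadF_eq_of_le _ y le_rfl hdet.ne', div_eq_div_iff hdet.ne' hs.ne']
  ring

lemma four_mul_le_g2Fun (μ : ℝ) {s : ℝ} (hs : 0 < s) : 4 * μ ≤ g2Fun μ s := by
  rw [g2Fun, le_div_iff₀ hs]
  nlinarith [sq_nonneg (1 - μ * s)]

lemma g2Fun_one_div {μ : ℝ} (hμ : μ ≠ 0) : g2Fun μ (1 / μ) = 4 * μ := by
  rw [g2Fun, div_eq_iff (one_div_ne_zero hμ)]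
  field_simp
  ring

section gFun

variable {μ₁ μ₂ ρ t s : ℝ}

lemma g2Fun_le_quadF (x : ℝ) {y : ℝ} (hρ : ρ ^ 2 < 1) (hμ₂ : 0 ≤ 1 + μ₂ * s) (ht : 0 < t)
    (hts : t ≤ s) (hy : 1 + μ₂ * s ≤ y) :
    g2Fun μ₂ s ≤ quadF ρ t s x y :=
  calc g2Fun μ₂ s ≤ y ^ 2 / s := by
        have := ht.trans_le hts
        rw [g2Fun]; gcongr
    _ ≤ quadF ρ t s x y := sq_div_le_quadF x y hρ ht hts

lemma g2Fun_le_gFun (hρ : ρ ^ 2 < 1) (hμ₂ : 0 ≤ 1 + μ₂ * s) (ht : 0 < t) (hts : t ≤ s) :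
    g2Fun μ₂ s ≤ gFun μ₁ μ₂ ρ t s := by
  refine le_csInf ⟨_, _, _, le_rfl, le_rfl, rfl⟩ ?_
  rintro q ⟨x, y, -, hy, rfl⟩
  exact g2Fun_le_quadF x hρ hμ₂ ht hts hy

lemma gFun_diag_eq_g2Fun (hρ : ρ ^ 2 < 1) (hμ₂ : 0 ≤ 1 + μ₂ * s) (hs : 0 < s)
    (hadm : 1 + μ₁ * s ≤ ρ * (1 + μ₂ * s)) :
    gFun μ₁ μ₂ ρ s s = g2Fun μ₂ s := by
  refine le_antisymm (csInf_le ⟨g2Fun μ₂ s, ?_⟩ ?_) (g2Fun_le_gFun hρ hμ₂ hs le_rfl)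
  · rintro q ⟨x, y, -, hy, rfl⟩
    exact g2Fun_le_quadF x hρ hμ₂ hs le_rfl hy
  · exact ⟨_, _, hadm, le_rfl, (quadF_diag_mul_self _ hρ hs).symm⟩

end gFun

theorem stmt16_general (μ₁ μ₂ ρ : ℝ) (hμ1 : 0 < μ₁) (hμ12 : μ₁ ≤ μ₂)
    (hρu : ρ < 1) (hρ2 : (μ₁ + μ₂) / (2 * μ₂) < ρ) :
    IsGLB { v : ℝ | ∃ t s : ℝ, 0 < t ∧ t ≤ s ∧ v = gFun μ₁ μ₂ ρ t s } (4 * μ₂) ∧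
    g2Fun μ₂ (1 / μ₂) = 4 * μ₂ := by
  have hμ₂ : 0 < μ₂ := hμ1.trans_le hμ12
  have hρ : ρ ^ 2 < 1 := by
    have : 0 < ρ := lt_trans (by positivity) hρ2
    nlinarith
  have hpos : ∀ s, 0 < s → 0 ≤ 1 + μ₂ * s := fun s hs => by positivity
  have hs : 0 < 1 / μ₂ := by positivity
  have hadm : 1 + μ₁ * (1 / μ₂) ≤ ρ * (1 + μ₂ * (1 / μ₂)) := by
    rw [div_lt_iff₀ (by positivity)] at hρ2
    field_simp
    linarith
  refine ⟨IsLeast.isGLB ⟨⟨1 / μ₂, 1 / μ₂, hs, le_rfl, ?_⟩, ?_⟩, g2Fun_one_div hμ₂.ne'⟩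
  · rw [gFun_diag_eq_g2Fun hρ (hpos _ hs) hs hadm, g2Fun_one_div hμ₂.ne']
  · rintro v ⟨t, s, ht, hts, rfl⟩
    exact (four_mul_le_g2Fun μ₂ (ht.trans_le hts)).trans
      (g2Fun_le_gFun hρ (hpos s (ht.trans_le hts)) ht hts)

theorem stmt16 (μ₁ μ₂ ρ : ℝ) (hμ1 : 0 < μ₁) (hμ12 : μ₁ ≤ μ₂)
    (hρl : -1 < ρ) (hρu : ρ < 1) (hρ2 : (μ₁ + μ₂) / (2 * μ₂) < ρ) :
    IsGLB { v : ℝ | ∃ t s : ℝ, 0 < t ∧ t ≤ s ∧ v = gFun μ₁ μ₂ ρ t s } (4 * μ₂) ∧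
    g2Fun μ₂ (1 / μ₂) = 4 * μ₂ :=
  stmt16_general μ₁ μ₂ ρ hμ1 hμ12 hρu hρ2
end
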